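/- arXiv:1011.2918 — 7 statements merged into one kernel-verified Lean document; each statement's English description precedes it below -/
import Mathlib

section
/- Maximum principle lower bound: Let N ≥ 1, T > 0, and let u: {0,1} × {0,…,N} × [0,T] → ℝ, written u_n(i,t), be a C¹-in-time solution of the system -du_n/dt = γ⁺_n(i,t)(u_{n+1} - u_n) + γ⁻_n(i,t)(u_{n-1} - u_n) + h(ū_n - u_n, n/N, i), where ū_n(i,t) = u_n(1-i,t), the coefficients satisfy γ⁺_n, γ⁻_n ≥ 0 with γ⁻_0 = 0 and γ⁺_N = 0, and h(p,θ,i) is monotone increasing in p. Let M = max over (i,θ) ∈ {0,1}×[0,1] of |h(0,θ,i)|. Then for all (i,n,t), u_n(i,t) ≥ -max_{m,j}|u_m(j,T)| - 2M(T-t). -/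
/-!
Shift `u` by the barrier `UT + (2M + ε)(T - t)`. The shifted functions are nonnegative at the
terminal time, and whenever one of them first touches zero (going backwards in time) while all are
still nonnegative, the corresponding `u_n(i, t)` is a global minimum of `u(·, t)`. There the jump
terms are nonnegative, monotonicity of `h` gives `h(ū_n - u_n, n/N, i) ≥ -M`, and so the time
derivative of the shifted function is at most `-M - ε < 0`: it cannot cross zero. Letting `ε → 0`
gives the bound.
-/

open Set Filter Topology

theorem HasDerivAt.eventually_nhdsLT_gt {f : ℝ → ℝ} {f' x : ℝ} (hf : HasDerivAt f f' x)
    (hf' : f' < 0) : ∀ᶠ y in 𝓝[<] x, f x < f y := by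
  have hslope : ∀ᶠ y in 𝓝[<] x, 0 < slope (-f) x y :=
    (hasDerivAt_iff_tendsto_slope_left_right.1 hf.neg).1.eventually
      (eventually_gt_nhds (neg_pos.2 hf'))
  filter_upwards [hslope, self_mem_nhdsWithin] with y hy hyx
  simpa using (slope_pos_iff_gt hyx).1 hy

theorem forall_nonneg_on_Icc_of_deriv_neg_at_zero {ι : Type*} [Finite ι] {f f' : ι → ℝ → ℝ}
    {a b : ℝ} (hf : ∀ k, ∀ t ∈ Icc a b, HasDerivAt (f k) (f' k t) t) (hb : ∀ k, 0 ≤ f k b)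
    (hzero : ∀ t ∈ Ioc a b, (∀ j, 0 ≤ f j t) → ∀ k, f k t = 0 → f' k t < 0) :
    ∀ t ∈ Icc a b, ∀ k, 0 ≤ f k t := by
  set S : Set ℝ := (fun t k => f k t) ⁻¹' Ici 0
  have hclosed : IsClosed (S ∩ Icc a b) := by
    have hcont : ContinuousOn (fun t k => f k t) (Icc a b) :=
      continuousOn_pi.2 fun k t ht => (hf k t ht).continuousAt.continuousWithinAt
    simpa only [inter_comm] using hcont.preimage_isClosed_of_isClosed isClosed_Icc isClosed_Ici
  have hnhds : ∀ x ∈ S ∩ Ioc a b, S ∈ 𝓝[<] x := by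
    rintro x ⟨hxS, hx⟩
    refine eventually_all.2 fun k => ?_
    rcases (hxS k).eq_or_lt with hx0 | hpos
    · filter_upwards [(hf k x (Ioc_subset_Icc_self hx)).eventually_nhdsLT_gt
        (hzero x hx hxS k hx0.symm)] with y hy
      exact hx0 ▸ hy.le
    · exact nhdsWithin_le_nhds <|
        (hf k x (Ioc_subset_Icc_self hx)).continuousAt.eventually (eventually_gt_nhds hpos) |>.mono
          fun y hy => hy.le
  exact fun t ht => hclosed.Icc_subset_of_forall_exists_lt hb
    (fun x hx y hy => nonempty_of_mem (inter_mem (hnhds x hx) (Ico_mem_nhdsLT hy))) ht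

theorem nonneg_of_forall_pos_nonneg_add_mul {x d : ℝ} (h : ∀ ε > 0, 0 ≤ x + ε * d) : 0 ≤ x := by
  have hlim : Tendsto (fun ε => x + ε * d) (𝓝 0) (𝓝 (x + 0 * d)) :=
    tendsto_const_nhds.add (tendsto_id.mul_const d)
  rw [zero_mul, add_zero] at hlim
  exact ge_of_tendsto (hlim.mono_left nhdsWithin_le_nhds)
    (eventually_nhdsWithin_of_forall (s := Ioi 0) h)

theorem neg_le_generator_of_forall_le {N : ℕ} {M : ℝ} {v γp γm : Fin 2 → ℕ → ℝ}
    {h : ℝ → ℝ → Fin 2 → ℝ} (hγp : ∀ i n, 0 ≤ γp i n) (hγm : ∀ i n, 0 ≤ γm i n)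
    (hγpN : ∀ i, γp i N = 0) (hmono : ∀ θ i, Monotone fun p => h p θ i)
    (hM : ∀ θ ∈ Icc (0:ℝ) 1, ∀ i, |h 0 θ i| ≤ M) {i : Fin 2} {n : ℕ} (hn : n ≤ N)
    (hmin : ∀ j m, m ≤ N → v i n ≤ v j m) :
    -M ≤ γp i n * (v i (n+1) - v i n) + γm i n * (v i (n-1) - v i n)
      + h (v (1-i) n - v i n) ((n : ℝ) / N) i := by
  have hup : 0 ≤ γp i n * (v i (n+1) - v i n) := by
    rcases hn.eq_or_lt with rfl | hlt
    · simp [hγpN]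
    · exact mul_nonneg (hγp i n) (sub_nonneg.2 (hmin i (n+1) hlt))
  have hdown : 0 ≤ γm i n * (v i (n-1) - v i n) :=
    mul_nonneg (hγm i n) (sub_nonneg.2 (hmin i (n-1) (n.sub_le 1 |>.trans hn)))
  have hθ : (n : ℝ) / N ∈ Icc (0:ℝ) 1 :=
    ⟨by positivity, div_le_one_of_le₀ (by exact_mod_cast hn) N.cast_nonneg⟩
  have hswitch : h 0 ((n : ℝ) / N) i ≤ h (v (1-i) n - v i n) ((n : ℝ) / N) i :=
    hmono _ i (sub_nonneg.2 (hmin (1-i) n hn))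
  linarith [neg_le_of_abs_le (hM _ hθ i)]

theorem maximum_principle_lower_bound_general (N : ℕ) (T : ℝ)
    (u : Fin 2 → ℕ → ℝ → ℝ) (γp γm : Fin 2 → ℕ → ℝ → ℝ)
    (h : ℝ → ℝ → Fin 2 → ℝ) (M UT : ℝ)
    (hγp : ∀ i n t, 0 ≤ γp i n t) (hγm : ∀ i n t, 0 ≤ γm i n t)
    (hbN : ∀ i t, γp i N t = 0)
    (hmono : ∀ θ i, Monotone fun p => h p θ i)
    (hM : ∀ θ ∈ Icc (0:ℝ) 1, ∀ i, |h 0 θ i| ≤ M)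
    (hUT : ∀ j m, m ≤ N → |u j m T| ≤ UT)
    (hode : ∀ i n, n ≤ N → ∀ t ∈ Icc 0 T,
      HasDerivAt (u i n)
        (-(γp i n t * (u i (n+1) t - u i n t) + γm i n t * (u i (n-1) t - u i n t)
          + h (u (1-i) n t - u i n t) ((n : ℝ) / N) i)) t) :
    ∀ i n, n ≤ N → ∀ t ∈ Icc 0 T, -UT - 2 * M * (T - t) ≤ u i n t := by
  have hM0 : 0 ≤ M := (abs_nonneg _).trans (hM 0 ⟨le_rfl, zero_le_one⟩ 0)
  have barrier : ∀ ε > 0, ∀ t ∈ Icc 0 T, ∀ i n, n ≤ N →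
      0 ≤ u i n t + UT + (2 * M + ε) * (T - t) := by
    intro ε hε
    have hshifted := forall_nonneg_on_Icc_of_deriv_neg_at_zero (ι := Fin 2 × Fin (N+1))
      (f := fun k s => u k.1 k.2 s + UT + (2 * M + ε) * (T - s))
      (f' := fun k s => -(γp k.1 k.2 s * (u k.1 (k.2+1) s - u k.1 k.2 s)
        + γm k.1 k.2 s * (u k.1 (k.2-1) s - u k.1 k.2 s)
        + h (u (1-k.1) k.2 s - u k.1 k.2 s) ((k.2 : ℝ) / N) k.1) - (2 * M + ε))
      (fun k s hs => (((hode k.1 k.2 k.2.is_le s hs).add_const UT).add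
        (((hasDerivAt_id s).const_sub T).const_mul _)).congr_deriv (by ring))
      (fun k => by linarith [neg_le_of_abs_le (hUT k.1 k.2 k.2.is_le)])
      (by
        rintro s - hall ⟨i, n⟩ hzero
        have hmin : ∀ j m, m ≤ N → u i n s ≤ u j m s := fun j m hm => by
          linarith [hall (j, ⟨m, Nat.lt_succ_of_le hm⟩)]
        have hgen := neg_le_generator_of_forall_le (v := fun j m => u j m s) (fun i n => hγp i n s)
          (fun i n => hγm i n s) (fun i => hbN i s) hmono hM n.is_le hmin
        dsimp only at hgen ⊢
        linarith)
    exact fun t ht i n hn => hshifted t ht (i, ⟨n, Nat.lt_succ_of_le hn⟩)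
  intro i n hn t ht
  have hlimit := nonneg_of_forall_pos_nonneg_add_mul (x := u i n t + UT + 2 * M * (T - t))
    (d := T - t) fun ε hε => by linarith [barrier ε hε t ht i n hn]
  linarith

/-- Maximum principle lower bound for the Hamilton-Jacobi ODE system
of the N+1 player game: `u_n(i,t) ≥ -max|u(T)| - 2M(T-t)`. -/
theorem maximum_principle_lower_bound (N : ℕ) (hN : 1 ≤ N) (T : ℝ) (hT : 0 < T)
    (u : Fin 2 → ℕ → ℝ → ℝ) (γp γm : Fin 2 → ℕ → ℝ → ℝ)
    (h : ℝ → ℝ → Fin 2 → ℝ) (M UT : ℝ)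
    (hγp : ∀ i n t, 0 ≤ γp i n t) (hγm : ∀ i n t, 0 ≤ γm i n t)
    (hb0 : ∀ i t, γm i 0 t = 0) (hbN : ∀ i t, γp i N t = 0)
    (hmono : ∀ θ i, Monotone fun p => h p θ i)
    (hM : ∀ θ ∈ Icc (0:ℝ) 1, ∀ i, |h 0 θ i| ≤ M)
    (hUT : ∀ j m, m ≤ N → |u j m T| ≤ UT)
    (hode : ∀ i n, n ≤ N → ∀ t ∈ Icc 0 T,
      HasDerivAt (u i n)
        (-(γp i n t * (u i (n+1) t - u i n t) + γm i n t * (u i (n-1) t - u i n t)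
          + h (u (1-i) n t - u i n t) ((n : ℝ) / N) i)) t) :
    ∀ i n, n ≤ N → ∀ t ∈ Icc 0 T, -UT - 2 * M * (T - t) ≤ u i n t :=
  maximum_principle_lower_bound_general N T u γp γm h M UT hγp hγm hbN hmono hM hUT hode
end

section
/- Maximum principle two-sided bound: Under the same assumptions as the Hamilton–Jacobi system above (coefficients γ± ≥ 0 with boundary conventions, h nondecreasing in p, M = max_{i,θ}|h(0,θ,i)|), any solution u of -du_n/dt = γ⁺_n(u_{n+1}-u_n) + γ⁻_n(u_{n-1}-u_n) + h(ū_n - u_n, n/N, i) on [0,T] satisfies ‖u(t)‖_∞ ≤ ‖u(T)‖_∞ + 2M(T-t) for all 0 ≤ t ≤ T, where ‖u(t)‖_∞ = max_{n,i}|u_n(i,t)|. -/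
/-!
Reversing time, `τ ↦ u(T - τ)` has derivative equal to the right-hand side of the system, and
at an index where `u` is maximal all jump terms are `≤ 0` while monotonicity of `h` gives
`h(ū - u, θ, i) ≤ h(0, θ, i) ≤ M`. So the maximum over the finitely many components grows, in
reversed time, at rate at most `M`; this is made rigorous by continuous induction against the
barrier `C + ε + (M + ε) τ`, then `ε → 0`. Applying this to `-u` with `p ↦ -h(-p, θ, i)` gives
the lower bound, and `M ≥ 0` absorbs the factor `2`.
-/

open Set Filter Topology

theorem forall_image_le_of_deriv_right_lt_deriv_boundary {ι : Type*} [Finite ι]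
    {f f' : ι → ℝ → ℝ} {a b : ℝ} (hf : ∀ i, ContinuousOn (f i) (Icc a b))
    (hf' : ∀ i, ∀ x ∈ Ico a b, HasDerivWithinAt (f i) (f' i x) (Ici x) x)
    {B B' : ℝ → ℝ} (ha : ∀ i, f i a ≤ B a) (hB : ContinuousOn B (Icc a b))
    (hB' : ∀ x ∈ Ico a b, HasDerivWithinAt B (B' x) (Ici x) x)
    (bound : ∀ x ∈ Ico a b, ∀ i, (∀ j, f j x ≤ f i x) → f i x = B x → f' i x < B' x) :
    ∀ ⦃x⦄, x ∈ Icc a b → ∀ i, f i x ≤ B x := by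
  set s := {x | ∀ i, f i x ≤ B x}
  have hs : IsClosed (s ∩ Icc a b) := by
    have hcont : ContinuousOn (fun x i => (f i x, B x)) (Icc a b) :=
      continuousOn_pi.2 fun i => (hf i).prodMk hB
    have hclosed : IsClosed {p : ι → ℝ × ℝ | ∀ i, (p i).1 ≤ (p i).2} := by
      simp only [ofPred_forall]
      exact isClosed_iInter fun i => isClosed_le (by fun_prop) (by fun_prop)
    rw [inter_comm]
    exact hcont.preimage_isClosed_of_isClosed isClosed_Icc hclosed
  refine fun x hx => hs.Icc_subset_of_forall_mem_nhdsWithin ha (fun x ⟨hxB, hxab⟩ => ?_) hx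
  refine eventually_all.2 fun i => ?_
  rcases (hxB i).lt_or_eq with hlt | heq
  · have hfc := (hf' i x hxab).continuousWithinAt.mono Ioi_subset_Ici_self
    have hBc := (hB' x hxab).continuousWithinAt.mono Ioi_subset_Ici_self
    exact (hfc.eventually_lt hBc hlt).mono fun _ => le_of_lt
  · have hmax : ∀ j, f j x ≤ f i x := fun j => heq ▸ hxB j
    have hslope : ∀ᶠ z in 𝓝[>] x, slope (fun y => f i y - B y) x z < 0 :=
      ((hf' i x hxab).sub (hB' x hxab)).Ioi_of_Ici.limsup_slope_le' (lt_irrefl x)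
        (sub_neg.2 (bound x hxab i hmax heq))
    filter_upwards [hslope, self_mem_nhdsWithin] with z hz hxz
    rw [slope_def_field, div_lt_iff₀ (sub_pos.2 hxz), zero_mul] at hz
    linarith

theorem forall_image_le_add_mul_of_deriv_right_le {ι : Type*} [Finite ι]
    {f f' : ι → ℝ → ℝ} {a b C M : ℝ} (hf : ∀ i, ContinuousOn (f i) (Icc a b))
    (hf' : ∀ i, ∀ x ∈ Ico a b, HasDerivWithinAt (f i) (f' i x) (Ici x) x)
    (ha : ∀ i, f i a ≤ C) (bound : ∀ x ∈ Ico a b, ∀ i, (∀ j, f j x ≤ f i x) → f' i x ≤ M) :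
    ∀ ⦃x⦄, x ∈ Icc a b → ∀ i, f i x ≤ C + M * (x - a) := by
  intro x hx i
  have barrier : ∀ ε > 0, f i x ≤ C + ε + (M + ε) * (x - a) := by
    intro ε hε
    have hB : ∀ y, HasDerivAt (fun y => C + ε + (M + ε) * (y - a)) (M + ε) y := fun y => by
      simpa using (((hasDerivAt_id y).sub_const a).const_mul (M + ε)).const_add (C + ε)
    refine forall_image_le_of_deriv_right_lt_deriv_boundary hf hf' (fun j => ?_)
      (fun y _ => (hB y).continuousAt.continuousWithinAt) (fun y _ => (hB y).hasDerivWithinAt)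
      (fun y hy j hj _ => (bound y hy j hj).trans_lt (lt_add_of_pos_right M hε)) hx i
    linarith [ha j]
  have hlim : Tendsto (fun ε => C + ε + (M + ε) * (x - a)) (𝓝[>] 0) (𝓝 (C + M * (x - a))) :=
    tendsto_nhdsWithin_of_tendsto_nhds <| by
      simpa using (by fun_prop : Continuous fun ε => C + ε + (M + ε) * (x - a)).tendsto 0
  exact ge_of_tendsto hlim (eventually_nhdsWithin_of_forall barrier)

noncomputable def hjRhs (γp γm : Fin 2 → ℕ → ℝ → ℝ) (h : ℝ → ℝ → Fin 2 → ℝ) (N : ℕ)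
    (u : Fin 2 → ℕ → ℝ → ℝ) (i : Fin 2) (n : ℕ) (t : ℝ) : ℝ :=
  γp i n t * (u i (n + 1) t - u i n t) + γm i n t * (u i (n - 1) t - u i n t)
    + h (u (1 - i) n t - u i n t) ((n : ℝ) / N) i

section HamiltonJacobi

variable {γp γm : Fin 2 → ℕ → ℝ → ℝ} {h : ℝ → ℝ → Fin 2 → ℝ} {N : ℕ} {M : ℝ}

theorem hjRhs_le_of_isMax (hγp : ∀ i n t, 0 ≤ γp i n t) (hγm : ∀ i n t, 0 ≤ γm i n t)
    (hb0 : ∀ i t, γm i 0 t = 0) (hbN : ∀ i t, γp i N t = 0)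
    (hmono : ∀ θ i, Monotone fun p => h p θ i) (hM : ∀ θ ∈ Icc (0:ℝ) 1, ∀ i, |h 0 θ i| ≤ M)
    {u : Fin 2 → ℕ → ℝ → ℝ} {i : Fin 2} {n : ℕ} {t : ℝ} (hn : n ≤ N)
    (hmax : ∀ j m, m ≤ N → u j m t ≤ u i n t) : hjRhs γp γm h N u i n t ≤ M := by
  have hup : γp i n t * (u i (n + 1) t - u i n t) ≤ 0 := by
    rcases hn.eq_or_lt with rfl | hlt
    · simp [hbN]
    · exact mul_nonpos_of_nonneg_of_nonpos (hγp i n t) (sub_nonpos.2 (hmax i (n + 1) hlt))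
  have hdown : γm i n t * (u i (n - 1) t - u i n t) ≤ 0 := by
    rcases n.eq_zero_or_pos with rfl | _
    · simp [hb0]
    · exact mul_nonpos_of_nonneg_of_nonpos (hγm i n t) (sub_nonpos.2 (hmax i (n - 1) (by omega)))
  have hθ : (n : ℝ) / N ∈ Icc (0:ℝ) 1 :=
    ⟨by positivity, div_le_one_of_le₀ (by exact_mod_cast hn) (Nat.cast_nonneg N)⟩
  have hswitch : h (u (1 - i) n t - u i n t) ((n : ℝ) / N) i ≤ M :=
    calc h (u (1 - i) n t - u i n t) ((n : ℝ) / N) i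
        ≤ h 0 ((n : ℝ) / N) i := hmono _ i (sub_nonpos.2 (hmax (1 - i) n hn))
      _ ≤ M := (le_abs_self _).trans (hM _ hθ i)
  unfold hjRhs
  linarith

theorem hjRhs_neg (u : Fin 2 → ℕ → ℝ → ℝ) (i : Fin 2) (n : ℕ) (t : ℝ) :
    hjRhs γp γm (fun p θ j => -h (-p) θ j) N (-u) i n t = -hjRhs γp γm h N u i n t := by
  simp only [hjRhs, Pi.neg_apply, neg_sub_neg, neg_sub]
  ring

theorem le_add_mul_of_hasDerivAt_hjRhs (hγp : ∀ i n t, 0 ≤ γp i n t)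
    (hγm : ∀ i n t, 0 ≤ γm i n t) (hb0 : ∀ i t, γm i 0 t = 0) (hbN : ∀ i t, γp i N t = 0)
    (hmono : ∀ θ i, Monotone fun p => h p θ i) (hM : ∀ θ ∈ Icc (0:ℝ) 1, ∀ i, |h 0 θ i| ≤ M)
    {u : Fin 2 → ℕ → ℝ → ℝ} {T UT : ℝ} (hUT : ∀ j m, m ≤ N → u j m T ≤ UT)
    (hode : ∀ i n, n ≤ N → ∀ t ∈ Icc 0 T, HasDerivAt (u i n) (-hjRhs γp γm h N u i n t) t) :
    ∀ i n, n ≤ N → ∀ t ∈ Icc 0 T, u i n t ≤ UT + M * (T - t) := by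
  intro i n hn t ht
  have hrev : ∀ s : Fin 2 × Fin (N + 1), ∀ τ ∈ Icc 0 T, HasDerivAt (fun τ => u s.1 s.2 (T - τ))
      (hjRhs γp γm h N u s.1 s.2 (T - τ)) τ := fun s τ hτ => by
    simpa using (hode s.1 s.2 s.2.is_le (T - τ)
      ⟨by linarith [hτ.2], by linarith [hτ.1]⟩).comp_const_sub T τ
  have key := forall_image_le_add_mul_of_deriv_right_le (a := 0) (b := T) (C := UT) (M := M)
    (fun s τ hτ => (hrev s τ hτ).continuousAt.continuousWithinAt)
    (fun s τ hτ => (hrev s τ (Ico_subset_Icc_self hτ)).hasDerivWithinAt)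
    (fun s => by simpa using hUT s.1 s.2 s.2.is_le)
    (fun τ _ s hs => hjRhs_le_of_isMax hγp hγm hb0 hbN hmono hM s.2.is_le
      fun j m hm => hs (j, ⟨m, Nat.lt_succ_of_le hm⟩))
    (x := T - t) ⟨by linarith [ht.2], by linarith [ht.1]⟩ (i, ⟨n, Nat.lt_succ_of_le hn⟩)
  simpa using key

end HamiltonJacobi

theorem maximum_principle_two_sided_general (N : ℕ) (T : ℝ)
    (u : Fin 2 → ℕ → ℝ → ℝ) (γp γm : Fin 2 → ℕ → ℝ → ℝ)
    (h : ℝ → ℝ → Fin 2 → ℝ) (M UT : ℝ)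
    (hγp : ∀ i n t, 0 ≤ γp i n t) (hγm : ∀ i n t, 0 ≤ γm i n t)
    (hb0 : ∀ i t, γm i 0 t = 0) (hbN : ∀ i t, γp i N t = 0)
    (hmono : ∀ θ i, Monotone fun p => h p θ i)
    (hM : ∀ θ ∈ Icc (0:ℝ) 1, ∀ i, |h 0 θ i| ≤ M)
    (hUT : ∀ j m, m ≤ N → |u j m T| ≤ UT)
    (hode : ∀ i n, n ≤ N → ∀ t ∈ Icc 0 T,
      HasDerivAt (u i n)
        (-(γp i n t * (u i (n+1) t - u i n t) + γm i n t * (u i (n-1) t - u i n t)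
          + h (u (1-i) n t - u i n t) ((n : ℝ) / N) i)) t) :
    ∀ i n, n ≤ N → ∀ t ∈ Icc 0 T, |u i n t| ≤ UT + 2 * M * (T - t) := by
  intro i n hn t ht
  have hM0 : 0 ≤ M := (abs_nonneg _).trans (hM 0 ⟨le_rfl, zero_le_one⟩ 0)
  have upper := le_add_mul_of_hasDerivAt_hjRhs hγp hγm hb0 hbN hmono hM
    (fun j m hm => (le_abs_self _).trans (hUT j m hm)) hode i n hn t ht
  have lower := le_add_mul_of_hasDerivAt_hjRhs (u := -u) (h := fun p θ j => -h (-p) θ j)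
    hγp hγm hb0 hbN
    (fun θ j _ _ hpq => neg_le_neg (hmono θ j (neg_le_neg hpq)))
    (fun θ hθ j => by simpa using hM θ hθ j)
    (fun j m hm => (neg_le_abs _).trans (hUT j m hm))
    (fun j m hm s hs =>
      (hode j m hm s hs).neg.congr_deriv (by rw [hjRhs_neg, neg_neg, neg_neg]; rfl))
    i n hn t ht
  simp only [Pi.neg_apply] at lower
  have hgrowth : 0 ≤ M * (T - t) := mul_nonneg hM0 (sub_nonneg.2 ht.2)
  rw [abs_le]
  constructor <;> linarith

/-- Maximum principle two-sided bound for the Hamilton-Jacobi ODE system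
of the N+1 player game: `‖u(t)‖_∞ ≤ ‖u(T)‖_∞ + 2M(T-t)`. -/
theorem maximum_principle_two_sided (N : ℕ) (hN : 1 ≤ N) (T : ℝ) (hT : 0 < T)
    (u : Fin 2 → ℕ → ℝ → ℝ) (γp γm : Fin 2 → ℕ → ℝ → ℝ)
    (h : ℝ → ℝ → Fin 2 → ℝ) (M UT : ℝ)
    (hγp : ∀ i n t, 0 ≤ γp i n t) (hγm : ∀ i n t, 0 ≤ γm i n t)
    (hb0 : ∀ i t, γm i 0 t = 0) (hbN : ∀ i t, γp i N t = 0)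
    (hmono : ∀ θ i, Monotone fun p => h p θ i)
    (hM : ∀ θ ∈ Icc (0:ℝ) 1, ∀ i, |h 0 θ i| ≤ M)
    (hUT : ∀ j m, m ≤ N → |u j m T| ≤ UT)
    (hode : ∀ i n, n ≤ N → ∀ t ∈ Icc 0 T,
      HasDerivAt (u i n)
        (-(γp i n t * (u i (n+1) t - u i n t) + γm i n t * (u i (n-1) t - u i n t)
          + h (u (1-i) n t - u i n t) ((n : ℝ) / N) i)) t) :
    ∀ i n, n ≤ N → ∀ t ∈ Icc 0 T, |u i n t| ≤ UT + 2 * M * (T - t) :=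
  maximum_principle_two_sided_general N T u γp γm h M UT hγp hγm hb0 hbN hmono hM hUT hode
end

section
/- Duhamel-type differential inequality (Lemma 4.1.3): Let M(s) be the generator of the cooperative linear system above and K(t,s) its order-preserving fundamental solution satisfying ‖K(t,s)b‖_∞ ≤ ‖b‖_∞. Suppose z: [0,T] → ℝ^{2(N+1)} is C¹ and satisfies the componentwise differential inequality -ż(s) ≤ M(s)z(s) + f(z(s)) for all s ∈ [t,T], where f(z(s)) ∈ ℝ^{2(N+1)}. Then z(t) ≤ ‖z(T)‖_∞ + ∫_t^T ‖f(z(s))‖_∞ ds (componentwise), using d/ds K(t,s) = K(t,s)M(s). -/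
open Set Matrix

/-!
Along the solution, `s ↦ (K(t,s) z(s))_x` has derivative `(K(t,s) (M(s) z(s) + ż(s)))_x`.
Applying the order-preserving `K(t,s)` to `-ż ≤ M z + f` bounds this derivative below by
`-(K(t,s) f)_x ≥ -φ(s)`, so integrating from `t` to `T` gives
`z(t)_x ≤ (K(t,T) z(T))_x + ∫ φ`, and the contraction bound finishes.
-/

theorem hasDerivAt_mulVec_apply {m n : Type*} [Fintype n] {A : ℝ → Matrix m n ℝ}
    {A' : Matrix m n ℝ} {v : ℝ → n → ℝ} {v' : n → ℝ} {s : ℝ}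
    (hA : ∀ i j, HasDerivAt (fun r => A r i j) (A' i j) s)
    (hv : ∀ j, HasDerivAt (fun r => v r j) (v' j) s) (i : m) :
    HasDerivAt (fun r => (A r *ᵥ v r) i) ((A' *ᵥ v s + A s *ᵥ v') i) s := by
  simp only [mulVec, dotProduct, Pi.add_apply, ← Finset.sum_add_distrib]
  exact HasDerivAt.fun_sum fun j _ => (hA i j).mul (hv j)

theorem neg_le_mul_mulVec_add_mulVec {ι : Type*} [Fintype ι] {K M : Matrix ι ι ℝ}
    {z z' F : ι → ℝ} {c : ℝ} (hK : Monotone (K *ᵥ ·)) (hKF : ∀ x, |(K *ᵥ F) x| ≤ c)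
    (hineq : -z' ≤ M *ᵥ z + F) (x : ι) :
    -c ≤ ((K * M) *ᵥ z + K *ᵥ z') x := by
  have hKineq : -(K *ᵥ z') x ≤ ((K * M) *ᵥ z) x + (K *ᵥ F) x := by
    simpa [mulVec_neg, mulVec_add, mulVec_mulVec] using hK hineq x
  have hKF_le : (K *ᵥ F) x ≤ c := le_of_abs_le (hKF x)
  simp only [Pi.add_apply]
  linarith

theorem duhamel_differential_inequality_general
    {ι : Type*} [Fintype ι] [DecidableEq ι]
    (T t : ℝ) (htT : t ≤ T)
    (M : ℝ → Matrix ι ι ℝ) (K : ℝ → ℝ → Matrix ι ι ℝ)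
    (hKid : ∀ s, K s s = 1)
    (hKord : ∀ r s : ℝ, r ≤ s → ∀ p q : ι → ℝ, p ≤ q → K r s *ᵥ p ≤ K r s *ᵥ q)
    (hKcontr : ∀ r s : ℝ, r ≤ s → ∀ (b : ι → ℝ) (c : ℝ),
      (∀ x, |b x| ≤ c) → ∀ x, |(K r s *ᵥ b) x| ≤ c)
    (hKode : ∀ s ∈ Icc t T, ∀ p q : ι,
      HasDerivAt (fun r => K t r p q) ((K t s * M s) p q) s)
    (z z' F : ℝ → ι → ℝ)
    (hz : ∀ s ∈ Icc t T, ∀ x, HasDerivAt (fun r => z r x) (z' s x) s)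
    (hineq : ∀ s ∈ Icc t T, -z' s ≤ M s *ᵥ z s + F s)
    (ZT : ℝ) (hZT : ∀ x, |z T x| ≤ ZT)
    (φ : ℝ → ℝ) (hφcont : ContinuousOn φ (Icc t T))
    (hφ : ∀ s ∈ Icc t T, ∀ x, |F s x| ≤ φ s) :
    ∀ x, z t x ≤ ZT + ∫ s in t..T, φ s := by
  intro x
  have hderiv : ∀ s ∈ Icc t T, HasDerivAt (fun r => (K t r *ᵥ z r) x)
      (((K t s * M s) *ᵥ z s + K t s *ᵥ z' s) x) s :=
    fun s hs => hasDerivAt_mulVec_apply (hKode s hs) (hz s hs) x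
  have hlower : ∀ s ∈ Ioo t T, -φ s ≤ ((K t s * M s) *ᵥ z s + K t s *ᵥ z' s) x := by
    intro s hs
    have hs' : s ∈ Icc t T := Ioo_subset_Icc_self hs
    exact neg_le_mul_mulVec_add_mulVec (fun p q => hKord t s hs'.1 p q)
      (hKcontr t s hs'.1 _ _ (hφ s hs')) (hineq s hs') x
  have hintegral := intervalIntegral.integral_le_sub_of_hasDeriv_right_of_le
    (φ := fun s => -φ s) htT
    (fun s hs => (hderiv s hs).continuousAt.continuousWithinAt)
    (fun s hs => (hderiv s (Ioo_subset_Icc_self hs)).hasDerivWithinAt)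
    hφcont.integrableOn_Icc.neg hlower
  have hzT : (K t T *ᵥ z T) x ≤ ZT := le_of_abs_le (hKcontr t T htT (z T) ZT hZT x)
  rw [intervalIntegral.integral_neg, hKid, one_mulVec] at hintegral
  linarith

/-- Duhamel-type differential inequality (Lemma 4.1.3): if
`-ż(s) ≤ M(s)z(s) + f(z(s))` componentwise, with `K(t,s)` the order-preserving,
sup-norm-contracting fundamental solution satisfying `d/ds K(t,s) = K(t,s)M(s)`,
then `z(t) ≤ ‖z(T)‖_∞ + ∫_t^T ‖f(z(s))‖_∞ ds` componentwise. -/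
theorem duhamel_differential_inequality
    {ι : Type*} [Fintype ι] [DecidableEq ι] [Nonempty ι]
    (T t : ℝ) (htT : t ≤ T)
    (M : ℝ → Matrix ι ι ℝ) (K : ℝ → ℝ → Matrix ι ι ℝ)
    (hKflow : ∀ r s w : ℝ, K r s * K s w = K r w) (hKid : ∀ s, K s s = 1)
    (hKord : ∀ r s : ℝ, r ≤ s → ∀ p q : ι → ℝ, p ≤ q → K r s *ᵥ p ≤ K r s *ᵥ q)
    (hKcontr : ∀ r s : ℝ, r ≤ s → ∀ (b : ι → ℝ) (c : ℝ),
      (∀ x, |b x| ≤ c) → ∀ x, |(K r s *ᵥ b) x| ≤ c)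
    (hKode : ∀ s ∈ Icc t T, ∀ p q : ι,
      HasDerivAt (fun r => K t r p q) ((K t s * M s) p q) s)
    (z z' F : ℝ → ι → ℝ)
    (hz : ∀ s ∈ Icc t T, ∀ x, HasDerivAt (fun r => z r x) (z' s x) s)
    (hineq : ∀ s ∈ Icc t T, -z' s ≤ M s *ᵥ z s + F s)
    (ZT : ℝ) (hZT : ∀ x, |z T x| ≤ ZT)
    (φ : ℝ → ℝ) (hφcont : ContinuousOn φ (Icc t T))
    (hφ : ∀ s ∈ Icc t T, ∀ x, |F s x| ≤ φ s) :
    ∀ x, z t x ≤ ZT + ∫ s in t..T, φ s :=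
  duhamel_differential_inequality_general T t htT M K hKid hKord hKcontr hKode z z' F hz hineq ZT
    hZT φ hφcont hφ
end

section
/- Riccati-type comparison lemma: Let N be a natural number and C > 0. Let v: [0,T] → ℝ solve the terminal value problem -dv/ds = Cv + CNv² + C/N with v(T) ≤ C/N. Set T* = 1/(2C + 4C² + 1). If T ≤ T*, then v(s) ≤ 2C/N for all 0 ≤ s ≤ T. -/
open Set

set_option maxHeartbeats 400000 in
/-- Auxiliary real-parameter version of the Riccati comparison lemma. -/
theorem riccati_aux (C T n : ℝ) (hC : 0 < C) (hn1 : 1 ≤ n)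
    (hT0 : 0 ≤ T) (v : ℝ → ℝ)
    (hode : ∀ s ∈ Icc 0 T,
      HasDerivAt v (-(C * v s + C * n * (v s) ^ 2 + C / n)) s)
    (hvT : v T ≤ C / n)
    (hTb : T * (2 * C + 4 * C ^ 2 + 1) ≤ 1) :
    ∀ s ∈ Icc 0 T, v s ≤ 2 * (C / n) := by
  have hn0 : (0 : ℝ) < n := lt_of_lt_of_le one_pos hn1
  obtain ⟨q, hq, hq0, hqn⟩ : ∃ q, C / n = q ∧ 0 < q ∧ q * n = C :=
    ⟨_, rfl, div_pos hC hn0, div_mul_cancel₀ _ hn0.ne'⟩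
  rw [hq] at hvT hode ⊢
  -- continuity of v on [0, T]
  have hcont : ContinuousOn v (Icc 0 T) := fun s hs =>
    (hode s hs).continuousAt.continuousWithinAt
  -- the right-hand side is nonnegative
  have hq2 : C * n * q = C ^ 2 := by rw [← hqn]; ring
  have hfpos : ∀ x : ℝ, 0 ≤ C * x + C * n * x ^ 2 + q := by
    intro x
    nlinarith [sq_nonneg (2 * C * n * x + C), hq2, mul_pos hC hn0, mul_pos hC hC]
  -- hence v is antitone on [0, T]
  have hanti : AntitoneOn v (Icc 0 T) := by
    apply antitoneOn_of_deriv_nonpos (convex_Icc 0 T) hcont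
    · intro s hs
      rw [interior_Icc] at hs
      exact ((hode s (Ioo_subset_Icc_self hs)).differentiableAt).differentiableWithinAt
    · intro s hs
      rw [interior_Icc] at hs
      rw [(hode s (Ioo_subset_Icc_self hs)).deriv]
      have := hfpos (v s)
      linarith
  -- main argument: by contradiction
  by_contra hcon
  push_neg at hcon
  obtain ⟨s₂, hs₂, hv₂⟩ := hcon
  -- trivial case T = 0
  rcases hT0.eq_or_lt with hT | hTpos
  · have hsT : s₂ = T := le_antisymm hs₂.2 (hT ▸ hs₂.1)
    rw [hsT] at hv₂
    linarith
  -- choose a small ε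
  obtain ⟨ε, hε0, hεgap, hεn⟩ :
      ∃ ε, 0 < ε ∧ 2 * ε ≤ v s₂ - 2 * q ∧ 2 * C * n * ε ≤ C + 1 := by
    refine ⟨min ((v s₂ - 2 * q) / 2) ((C + 1) / (2 * C * n)), ?_, ?_, ?_⟩
    · exact lt_min (by linarith) (by positivity)
    · have := min_le_left ((v s₂ - 2 * q) / 2) ((C + 1) / (2 * C * n))
      linarith
    · have h := min_le_right ((v s₂ - 2 * q) / 2) ((C + 1) / (2 * C * n))
      rw [le_div_iff₀ (by positivity)] at h
      nlinarith
  obtain ⟨K, hK⟩ : ∃ K : ℝ, K = 2 * q + ε := ⟨_, rfl⟩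
  have hKv₂ : K ≤ v s₂ := by rw [hK]; linarith
  have hqK : q ≤ K := by rw [hK]; linarith
  -- first crossing point with value K
  obtain ⟨s₁, hs₁, hvs₁⟩ : ∃ s₁ ∈ Icc s₂ T, v s₁ = K := by
    have h := intermediate_value_Icc' hs₂.2 (hcont.mono (Icc_subset_Icc hs₂.1 le_rfl))
    exact h ⟨by linarith, hKv₂⟩
  have hs₁T : s₁ ∈ Icc 0 T := ⟨le_trans hs₂.1 hs₁.1, hs₁.2⟩
  -- crossing point with value q
  obtain ⟨s₃, hs₃, hvs₃⟩ : ∃ s₃ ∈ Icc s₁ T, v s₃ = q := by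
    have h := intermediate_value_Icc' hs₁.2 (hcont.mono (Icc_subset_Icc hs₁T.1 le_rfl))
    exact h ⟨hvT, by rw [hvs₁]; exact hqK⟩
  have hs₃T : s₃ ∈ Icc 0 T := ⟨le_trans hs₁T.1 hs₃.1, hs₃.2⟩
  -- on [s₁, s₃], we have q ≤ v s ≤ K
  have hbound : ∀ s ∈ Icc s₁ s₃, q ≤ v s ∧ v s ≤ K := by
    intro s hs
    have hsIcc : s ∈ Icc 0 T := ⟨le_trans hs₁T.1 hs.1, le_trans hs.2 hs₃.2⟩
    refine ⟨?_, ?_⟩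
    · have := hanti hsIcc hs₃T hs.2
      rw [hvs₃] at this; linarith
    · have := hanti hs₁T hsIcc hs.1
      rw [hvs₁] at this; linarith
  obtain ⟨fK, hfK⟩ : ∃ x : ℝ, x = C * K + C * n * K ^ 2 + q := ⟨_, rfl⟩
  have hfK0 : 0 ≤ fK := hfK ▸ hfpos K
  -- the auxiliary function s ↦ v s + fK * s is monotone on [s₁, s₃]
  have hmono : MonotoneOn (fun s => v s + fK * s) (Icc s₁ s₃) := by
    apply monotoneOn_of_deriv_nonneg (convex_Icc s₁ s₃)
    · exact (hcont.mono fun s hs =>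
        ⟨le_trans hs₁T.1 hs.1, le_trans hs.2 hs₃.2⟩).add
        (continuous_const.mul continuous_id).continuousOn
    · intro s hs
      rw [interior_Icc] at hs
      have hsIcc : s ∈ Icc 0 T :=
        ⟨le_trans hs₁T.1 hs.1.le, le_trans hs.2.le hs₃.2⟩
      exact (((hode s hsIcc).add
        ((hasDerivAt_id s).const_mul fK)).differentiableAt).differentiableWithinAt
    · intro s hs
      rw [interior_Icc] at hs
      have hsIcc : s ∈ Icc 0 T :=
        ⟨le_trans hs₁T.1 hs.1.le, le_trans hs.2.le hs₃.2⟩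
      have hd : HasDerivAt (fun s => v s + fK * s)
          (-(C * v s + C * n * (v s) ^ 2 + q) + fK * 1) s :=
        (hode s hsIcc).add ((hasDerivAt_id s).const_mul fK)
      rw [hd.deriv]
      obtain ⟨hlo, hhi⟩ := hbound s (Ioo_subset_Icc_self hs)
      have hvnn : 0 ≤ v s := le_trans hq0.le hlo
      rw [hfK]
      nlinarith [mul_nonneg hC.le (sub_nonneg.mpr hhi),
        mul_nonneg (mul_nonneg hC.le hn0.le)
          (mul_nonneg (sub_nonneg.mpr hhi) (by linarith : (0:ℝ) ≤ K + v s))]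
  -- hence K ≤ q + fK * T
  have hss : s₁ ≤ s₃ := hs₃.1
  have hg := hmono (left_mem_Icc.mpr hss) (right_mem_Icc.mpr hss) hss
  simp only at hg
  rw [hvs₁, hvs₃] at hg
  have hdiff : s₃ - s₁ ≤ T := by
    have := hs₁T.1; have := hs₃.2; linarith
  have hfin : K ≤ q + fK * T := by
    nlinarith [mul_le_mul_of_nonneg_left hdiff hfK0]
  -- final contradiction by algebra
  have hu0 : 0 < n * ε := mul_pos hn0 hε0
  have hnK : n * K = 2 * C + n * ε := by rw [hK]; linear_combination 2 * hqn
  have hnfK : n * fK = C * (2 * C + n * ε) + C * (2 * C + n * ε) ^ 2 + C := by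
    rw [hfK]
    linear_combination (C + C * (n * K + 2 * C + n * ε)) * hnK + hqn
  have hmain : 2 * C + n * ε ≤
      C + (C * (2 * C + n * ε) + C * (2 * C + n * ε) ^ 2 + C) * T := by
    calc 2 * C + n * ε = n * K := hnK.symm
      _ ≤ n * (q + fK * T) := mul_le_mul_of_nonneg_left hfin hn0.le
      _ = C + (C * (2 * C + n * ε) + C * (2 * C + n * ε) ^ 2 + C) * T := by
          linear_combination hqn + T * hnfK
  have p1 : 0 ≤ C * (1 - T * (2 * C + 4 * C ^ 2 + 1)) :=
    mul_nonneg hC.le (by linarith)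
  have p2 : 0 ≤ (n * ε) * (1 - T * (2 * C + 4 * C ^ 2 + 1)) :=
    mul_nonneg hu0.le (by linarith)
  have p3 : 0 ≤ T * (n * ε) * (C + 1 - 2 * C * (n * ε)) :=
    mul_nonneg (mul_nonneg hTpos.le hu0.le) (by nlinarith)
  have p4 : 0 < T * (n * ε) := mul_pos hTpos hu0
  have p5 : 0 < T * (n * ε) * C := mul_pos p4 hC
  nlinarith [hmain, p1, p2, p3, p4, p5]

/-- Riccati-type comparison lemma: a solution of
`-dv/ds = Cv + CNv² + C/N` with `v(T) ≤ C/N` stays below `2C/N` on `[0,T]`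
whenever `T ≤ T* = 1/(2C + 4C² + 1)`. -/
theorem riccati_comparison (C T : ℝ) (N : ℕ) (hC : 0 < C) (hN : 0 < N)
    (hT0 : 0 ≤ T) (v : ℝ → ℝ)
    (hode : ∀ s ∈ Icc 0 T,
      HasDerivAt v (-(C * v s + C * N * (v s) ^ 2 + C / N)) s)
    (hvT : v T ≤ C / N)
    (hTstar : T ≤ 1 / (2 * C + 4 * C ^ 2 + 1)) :
    ∀ s ∈ Icc 0 T, v s ≤ 2 * C / N := by
  have hTb : T * (2 * C + 4 * C ^ 2 + 1) ≤ 1 := by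
    rw [le_div_iff₀ (by positivity)] at hTstar
    linarith
  have hn1 : (1 : ℝ) ≤ (N : ℝ) := by exact_mod_cast hN
  have h := riccati_aux C T (N : ℝ) hC hn1 hT0 v hode hvT hTb
  intro s hs
  rw [mul_div_assoc]
  exact h s hs
end

section
/- Gradient estimate for the N+1 player game in integral form: Suppose w: [0,T] → [0,∞) is continuous, satisfies w(T) ≤ C/N, and w(t) ≤ w(T) + ∫_t^T [Cw(s) + CNw(s)² + C/N] ds for all t ∈ [0,T], where C > 0 and N ∈ ℕ. If T ≤ T* := 1/(2C + 4C² + 1), then w(t) ≤ 2C/N for all t ∈ [0,T]. -/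
/-!
With `M = 2C/N`, the integrand is at most `K = C/N · (2C + 4C² + 1)` wherever `0 ≤ w ≤ M`, and
`T ≤ T*` says exactly `T K ≤ C/N`. So if `w ≤ M` on `[t, T]` with `t > 0`, the integral
inequality gives `w t ≤ C/N + (T - t) K < C/N + T K ≤ M`: the bound improves itself strictly,
and a backward continuity induction from `t = T` propagates it to all of `[0, T]`.
-/

open Set Filter Topology

open OrderDual in
theorem IsClosed.Icc_subset_of_forall_mem_nhdsLT_of_Icc_subset {α : Type*}
    [ConditionallyCompleteLinearOrder α] [TopologicalSpace α] [OrderTopology α]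
    [DenselyOrdered α] {a b : α} {s : Set α} (hs : IsClosed (s ∩ Icc a b)) (hb : b ∈ s)
    (h : ∀ t ∈ Ioc a b, Icc t b ⊆ s → s ∈ 𝓝[<] t) :
    Icc a b ⊆ s := by
  have hs' : IsClosed (ofDual ⁻¹' s ∩ Icc (toDual b) (toDual a)) := by
    rw [Icc_toDual, ← preimage_inter]
    exact hs.preimage continuous_ofDual
  have := hs'.Icc_subset_of_forall_mem_nhdsGT_of_Icc_subset hb
    fun t ht hts => h t ⟨ht.2, ht.1⟩ fun x hx => hts ⟨hx.2, hx.1⟩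
  exact fun x hx => this ⟨hx.2, hx.1⟩

theorem ContinuousOn.forall_le_of_forall_Icc_le_imp_lt {α β : Type*}
    [ConditionallyCompleteLinearOrder α] [TopologicalSpace α] [OrderTopology α]
    [DenselyOrdered α] [LinearOrder β] [TopologicalSpace β] [OrderClosedTopology β]
    {f : α → β} {a b : α} {M : β} (hf : ContinuousOn f (Icc a b)) (hb : f b ≤ M)
    (h : ∀ t ∈ Ioc a b, (∀ s ∈ Icc t b, f s ≤ M) → f t < M) :
    ∀ t ∈ Icc a b, f t ≤ M := by
  have hclosed : IsClosed (f ⁻¹' Iic M ∩ Icc a b) := by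
    rw [inter_comm]
    exact hf.preimage_isClosed_of_isClosed isClosed_Icc isClosed_Iic
  refine IsClosed.Icc_subset_of_forall_mem_nhdsLT_of_Icc_subset hclosed hb fun t ht hbound => ?_
  have hcont : ContinuousWithinAt f (Iio t) t :=
    (hf t (Ioc_subset_Icc_self ht)).mono_of_mem_nhdsWithin
      (mem_of_superset (Ioc_mem_nhdsLT ht.1)
        (Ioc_subset_Icc_self.trans (Icc_subset_Icc_right ht.2)))
  exact mem_of_superset (hcont (Iio_mem_nhds (h t ht hbound))) fun _ hx => le_of_lt hx

theorem intervalIntegral.integral_le_sub_mul_of_le {f : ℝ → ℝ} {a b K : ℝ} (hab : a ≤ b)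
    (hf : IntervalIntegrable f MeasureTheory.volume a b) (h : ∀ x ∈ Icc a b, f x ≤ K) :
    ∫ x in a..b, f x ≤ (b - a) * K := by
  simpa only [intervalIntegral.integral_const, smul_eq_mul] using
    intervalIntegral.integral_mono_on hab hf intervalIntegrable_const h

theorem riccati_rhs_le_of_le_two_mul_div {C N x : ℝ} (hC : 0 ≤ C) (hN : 0 < N) (hx0 : 0 ≤ x)
    (hx : x ≤ 2 * C / N) :
    C * x + C * N * x ^ 2 + C / N ≤ C / N * (2 * C + 4 * C ^ 2 + 1) :=
  calc C * x + C * N * x ^ 2 + C / N ≤ C * (2 * C / N) + C * N * (2 * C / N) ^ 2 + C / N := by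
        gcongr
    _ = C / N * (2 * C + 4 * C ^ 2 + 1) := by field_simp; ring

theorem gradient_estimate_integral_form_general (C T : ℝ) (N : ℕ) (hC : 0 < C)
    (hN : 0 < N) (w : ℝ → ℝ)
    (hwc : ContinuousOn w (Icc 0 T))
    (hwpos : ∀ t ∈ Icc 0 T, 0 ≤ w t)
    (hwT : w T ≤ C / N)
    (hwint : ∀ t ∈ Icc 0 T,
      w t ≤ w T + ∫ s in t..T, (C * w s + C * N * (w s) ^ 2 + C / N))
    (hTstar : T ≤ 1 / (2 * C + 4 * C ^ 2 + 1)) :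
    ∀ t ∈ Icc 0 T, w t ≤ 2 * C / N := by
  have hNpos : (0 : ℝ) < N := Nat.cast_pos.mpr hN
  set K := C / N * (2 * C + 4 * C ^ 2 + 1) with hK_def
  have hK : 0 < K := by positivity
  have hTK : T * K ≤ C / N := by
    calc T * K ≤ 1 / (2 * C + 4 * C ^ 2 + 1) * K := by gcongr
      _ = C / N := by rw [hK_def]; field_simp
  refine hwc.forall_le_of_forall_Icc_le_imp_lt (hwT.trans ?_) fun t ht hbound => ?_
  · gcongr; linarith
  have hsub : Icc t T ⊆ Icc 0 T := Icc_subset_Icc_left ht.1.le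
  have hint : ∫ s in t..T, (C * w s + C * N * (w s) ^ 2 + C / N) ≤ (T - t) * K := by
    refine intervalIntegral.integral_le_sub_mul_of_le ht.2 ?_
      fun s hs => riccati_rhs_le_of_le_two_mul_div hC.le hNpos (hwpos s (hsub hs)) (hbound s hs)
    have hw : ContinuousOn w (uIcc t T) := hwc.mono (uIcc_of_le ht.2 ▸ hsub)
    exact ContinuousOn.intervalIntegrable (by fun_prop)
  calc w t ≤ w T + ∫ s in t..T, (C * w s + C * N * (w s) ^ 2 + C / N) :=
        hwint t (Ioc_subset_Icc_self ht)
    _ ≤ C / N + (T - t) * K := add_le_add hwT hint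
    _ < C / N + T * K := by rw [sub_mul]; linarith [mul_pos ht.1 hK]
    _ ≤ 2 * C / N := by rw [two_mul, add_div]; linarith

/-- Gradient estimate for the N+1 player game in integral form:
if `w(T) ≤ C/N` and `w(t) ≤ w(T) + ∫_t^T [Cw + CNw² + C/N] ds`, then
`w ≤ 2C/N` on `[0,T]` provided `T ≤ T* = 1/(2C + 4C² + 1)`. -/
theorem gradient_estimate_integral_form (C T : ℝ) (N : ℕ) (hC : 0 < C)
    (hN : 0 < N) (hT0 : 0 ≤ T) (w : ℝ → ℝ)
    (hwc : ContinuousOn w (Icc 0 T))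
    (hwpos : ∀ t ∈ Icc 0 T, 0 ≤ w t)
    (hwT : w T ≤ C / N)
    (hwint : ∀ t ∈ Icc 0 T,
      w t ≤ w T + ∫ s in t..T, (C * w s + C * N * (w s) ^ 2 + C / N))
    (hTstar : T ≤ 1 / (2 * C + 4 * C ^ 2 + 1)) :
    ∀ t ∈ Icc 0 T, w t ≤ 2 * C / N :=
  gradient_estimate_integral_form_general C T N hC hN w hwc hwpos hwT hwint hTstar
end

section
/- Uniqueness of the mean field game distribution: Let h: ℝ × [0,1] × {0,1} → ℝ be concave and C¹ in p with α*(p,θ,i) := ∂_p h(p,θ,i) ≥ 0, satisfying the monotonicity condition θ(h(q,θ̃,0)-h(q,θ,0)) + θ̃(h(p,θ,0)-h(p,θ̃,0)) + (1-θ)(h(-q,θ̃,1)-h(-q,θ,1)) + (1-θ̃)(h(-p,θ,1)-h(-p,θ̃,1)) ≤ -γ|θ-θ̃|² (γ > 0), and let ψ satisfy (x-y)(ψ(0,x)-ψ(0,y)) + (y-x)(ψ(1,x)-ψ(1,y)) ≥ 0. Suppose (θ, u) and (θ̃, ũ) are two C¹ solutions on [0,T] of the system: -du(i,t)/dt = h(u(1-i,t)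 - u(i,t), θ(t), i), dθ/dt = (1-θ)α*(u(0,t)-u(1,t), θ, 1) - θα*(u(1,t)-u(0,t), θ, 0), with θ(0) = θ̃(0) = θ̄ ∈ [0,1], θ, θ̃ taking values in [0,1], and u(i,T) = ψ(i,θ(T)), ũ(i,T) = ψ(i,θ̃(T)). Then θ(t) = θ̃(t) for all t ∈ [0,T]. -/
/-! The Lasry–Lions argument: the cross term `E = (θ' - θ) ((u₁ - u₀) - (u'₁ - u'₀))` vanishes
at time `0` because the initial distributions agree, is nonnegative at time `T` by the
monotonicity of `ψ`, and decreases at rate at least `γ (θ - θ')²`: along the flow, the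
tangent-line inequalities of the concave `h` bound `dE/dt` by the left-hand side of the
monotonicity condition on `h`. Hence `E ≡ 0`, and its derivative forces `θ = θ'`. -/

open Set

theorem ConcaveOn.sub_le_mul_sub_of_hasDerivAt {S : Set ℝ} {f : ℝ → ℝ} {f' x y : ℝ}
    (hf : ConcaveOn ℝ S f) (hx : x ∈ S) (hy : y ∈ S) (hd : HasDerivAt f f' y) :
    f x - f y ≤ f' * (x - y) := by
  rcases lt_trichotomy x y with hxy | rfl | hxy
  · have h := hf.le_slope_of_hasDerivAt hx hy hxy hd
    rw [slope_def_field, le_div_iff₀ (sub_pos.2 hxy)] at h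
    linarith
  · simp
  · have h := hf.slope_le_of_hasDerivAt hy hx hxy hd
    rw [slope_def_field, div_le_iff₀ (sub_pos.2 hxy)] at h
    linarith

theorem eqOn_zero_of_hasDerivAt_le_neg_sq {a b γ : ℝ} (hab : a < b) (hγ : 0 < γ) {E g : ℝ → ℝ}
    (hEc : ContinuousOn E (Icc a b))
    (hE : ∀ t ∈ Ioo a b, ∃ d, HasDerivAt E d t ∧ d ≤ -γ * g t ^ 2)
    (hg : ContinuousOn g (Icc a b)) (hEab : E a ≤ E b) : EqOn g 0 (Icc a b) := by
  have hanti : AntitoneOn E (Icc a b) := by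
    refine antitoneOn_of_deriv_nonpos (convex_Icc a b) hEc (fun t ht => ?_) (fun t ht => ?_)
    all_goals
      rw [interior_Icc] at ht
      obtain ⟨d, hd, hdle⟩ := hE t ht
    · exact hd.differentiableAt.differentiableWithinAt
    · rw [hd.deriv]
      nlinarith [sq_nonneg (g t)]
  have hconst : EqOn E (fun _ => E a) (Icc a b) := fun t ht =>
    le_antisymm (hanti (left_mem_Icc.2 hab.le) ht ht.1)
      (hEab.trans (hanti ht (right_mem_Icc.2 hab.le) ht.2))
  have hinterior : EqOn g 0 (Ioo a b) := by
    intro t ht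
    obtain ⟨d, hd, hdle⟩ := hE t ht
    have hd0 : d = 0 := hd.unique <| (hasDerivAt_const t (E a)).congr_of_eventuallyEq <|
      Filter.eventually_of_mem (Icc_mem_nhds ht.1 ht.2) hconst
    exact (sq_nonpos_iff _).1 (by nlinarith)
  exact hinterior.of_subset_closure hg continuousOn_const Ioo_subset_Icc_self
    (closure_Ioo hab.ne).ge

/-- With `p = u₁ - u₀` and `q = u'₁ - u'₀`, the left-hand side is `dE/dt`. -/
theorem mfg_dissipation_le {γ : ℝ} {h αs : ℝ → ℝ → Fin 2 → ℝ}
    (htan : ∀ (ϑ : ℝ) (i : Fin 2) (x y : ℝ), h x ϑ i - h y ϑ i ≤ αs y ϑ i * (x - y))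
    (hmon : ∀ p q : ℝ, ∀ θ ∈ Icc (0:ℝ) 1, ∀ θ' ∈ Icc (0:ℝ) 1,
      θ * (h q θ' 0 - h q θ 0) + θ' * (h p θ 0 - h p θ' 0)
        + (1 - θ) * (h (-q) θ' 1 - h (-q) θ 1)
        + (1 - θ') * (h (-p) θ 1 - h (-p) θ' 1) ≤ -γ * |θ - θ'| ^ 2)
    {θ θ' : ℝ} (hθ : θ ∈ Icc (0:ℝ) 1) (hθ' : θ' ∈ Icc (0:ℝ) 1) (p q : ℝ) :
    ((1 - θ') * αs (-q) θ' 1 - θ' * αs q θ' 0 - ((1 - θ) * αs (-p) θ 1 - θ * αs p θ 0)) * (p - q)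
      + (θ' - θ) * (-h (-p) θ 1 - -h p θ 0 - (-h (-q) θ' 1 - -h q θ' 0))
      ≤ -γ * (θ - θ') ^ 2 := by
  have h1 := mul_le_mul_of_nonneg_left (htan θ 0 q p) hθ.1
  have h2 := mul_le_mul_of_nonneg_left (htan θ' 0 p q) hθ'.1
  have h3 := mul_le_mul_of_nonneg_left (htan θ 1 (-q) (-p)) (sub_nonneg.2 hθ.2)
  have h4 := mul_le_mul_of_nonneg_left (htan θ' 1 (-p) (-q)) (sub_nonneg.2 hθ'.2)
  have hm := hmon p q θ hθ θ' hθ'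
  rw [sq_abs] at hm
  linarith

theorem mfg_uniqueness_general (T γ : ℝ) (hT : 0 < T) (hγ : 0 < γ)
    (h αs : ℝ → ℝ → Fin 2 → ℝ)
    (hderiv : ∀ (θ : ℝ) (i : Fin 2) (p : ℝ),
      HasDerivAt (fun q => h q θ i) (αs p θ i) p)
    (hconc : ∀ (θ : ℝ) (i : Fin 2), ConcaveOn ℝ univ fun p => h p θ i)
    (hmon : ∀ p q : ℝ, ∀ θ ∈ Icc (0:ℝ) 1, ∀ θ' ∈ Icc (0:ℝ) 1,
      θ * (h q θ' 0 - h q θ 0) + θ' * (h p θ 0 - h p θ' 0)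
        + (1 - θ) * (h (-q) θ' 1 - h (-q) θ 1)
        + (1 - θ') * (h (-p) θ 1 - h (-p) θ' 1) ≤ -γ * |θ - θ'| ^ 2)
    (ψ : Fin 2 → ℝ → ℝ)
    (hψ : ∀ x ∈ Icc (0:ℝ) 1, ∀ y ∈ Icc (0:ℝ) 1,
      0 ≤ (x - y) * (ψ 0 x - ψ 0 y) + (y - x) * (ψ 1 x - ψ 1 y))
    (θbar : ℝ)
    (θ θ' : ℝ → ℝ) (u u' : Fin 2 → ℝ → ℝ)
    (hθrange : ∀ t ∈ Icc 0 T, θ t ∈ Icc (0:ℝ) 1)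
    (hθ'range : ∀ t ∈ Icc 0 T, θ' t ∈ Icc (0:ℝ) 1)
    (hu : ∀ (i : Fin 2), ∀ t ∈ Icc 0 T,
      HasDerivAt (u i) (-h (u (1 - i) t - u i t) (θ t) i) t)
    (hu' : ∀ (i : Fin 2), ∀ t ∈ Icc 0 T,
      HasDerivAt (u' i) (-h (u' (1 - i) t - u' i t) (θ' t) i) t)
    (hθode : ∀ t ∈ Icc 0 T, HasDerivAt θ
      ((1 - θ t) * αs (u 0 t - u 1 t) (θ t) 1
        - θ t * αs (u 1 t - u 0 t) (θ t) 0) t)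
    (hθ'ode : ∀ t ∈ Icc 0 T, HasDerivAt θ'
      ((1 - θ' t) * αs (u' 0 t - u' 1 t) (θ' t) 1
        - θ' t * αs (u' 1 t - u' 0 t) (θ' t) 0) t)
    (hθ0 : θ 0 = θbar) (hθ'0 : θ' 0 = θbar)
    (huT : ∀ i, u i T = ψ i (θ T)) (hu'T : ∀ i, u' i T = ψ i (θ' T)) :
    ∀ t ∈ Icc 0 T, θ t = θ' t := by
  have htan : ∀ (ϑ : ℝ) (i : Fin 2) (x y : ℝ), h x ϑ i - h y ϑ i ≤ αs y ϑ i * (x - y) :=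
    fun ϑ i x y => (hconc ϑ i).sub_le_mul_sub_of_hasDerivAt (mem_univ x) (mem_univ y) (hderiv ϑ i y)
  set E : ℝ → ℝ := fun s => (θ' s - θ s) * (u 1 s - u 0 s - (u' 1 s - u' 0 s))
  have hE : ∀ t ∈ Icc 0 T, ∃ d, HasDerivAt E d t ∧ d ≤ -γ * (θ t - θ' t) ^ 2 := fun t ht =>
    ⟨_, ((hθ'ode t ht).sub (hθode t ht)).mul
        (((hu 1 t ht).sub (hu 0 t ht)).sub ((hu' 1 t ht).sub (hu' 0 t ht))), by
      simpa only [neg_sub, Pi.sub_apply, sub_self, sub_zero] using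
        mfg_dissipation_le htan hmon (hθrange t ht) (hθ'range t ht)
          (u 1 t - u 0 t) (u' 1 t - u' 0 t)⟩
  have hTmem : T ∈ Icc 0 T := right_mem_Icc.2 hT.le
  have hET : 0 ≤ E T := by
    simp only [E, huT, hu'T]
    linear_combination hψ _ (hθrange T hTmem) _ (hθ'range T hTmem)
  have hzero := eqOn_zero_of_hasDerivAt_le_neg_sq hT hγ
    (fun t ht => let ⟨_, hd, _⟩ := hE t ht; hd.continuousAt.continuousWithinAt)
    (fun t ht => hE t (Ioo_subset_Icc_self ht))
    (fun t ht => ((hθode t ht).continuousAt.sub (hθ'ode t ht).continuousAt).continuousWithinAt)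
    (by simpa only [E, hθ0, hθ'0, sub_self, zero_mul] using hET)
  exact fun t ht => sub_eq_zero.1 (hzero ht)

/-- Uniqueness of the mean field game distribution: under the
Lasry–Lions monotonicity conditions on `h` and `ψ`, any two solutions of the
initial-terminal value problem for the two-state mean field game system have
the same distribution `θ`. -/
theorem mfg_uniqueness (T γ : ℝ) (hT : 0 < T) (hγ : 0 < γ)
    (h αs : ℝ → ℝ → Fin 2 → ℝ)
    (hderiv : ∀ (θ : ℝ) (i : Fin 2) (p : ℝ),
      HasDerivAt (fun q => h q θ i) (αs p θ i) p)
    (hαpos : ∀ (p θ : ℝ) (i : Fin 2), 0 ≤ αs p θ i)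
    (hconc : ∀ (θ : ℝ) (i : Fin 2), ConcaveOn ℝ univ fun p => h p θ i)
    (hmon : ∀ p q : ℝ, ∀ θ ∈ Icc (0:ℝ) 1, ∀ θ' ∈ Icc (0:ℝ) 1,
      θ * (h q θ' 0 - h q θ 0) + θ' * (h p θ 0 - h p θ' 0)
        + (1 - θ) * (h (-q) θ' 1 - h (-q) θ 1)
        + (1 - θ') * (h (-p) θ 1 - h (-p) θ' 1) ≤ -γ * |θ - θ'| ^ 2)
    (ψ : Fin 2 → ℝ → ℝ)
    (hψ : ∀ x ∈ Icc (0:ℝ) 1, ∀ y ∈ Icc (0:ℝ) 1,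
      0 ≤ (x - y) * (ψ 0 x - ψ 0 y) + (y - x) * (ψ 1 x - ψ 1 y))
    (θbar : ℝ) (hθbar : θbar ∈ Icc (0:ℝ) 1)
    (θ θ' : ℝ → ℝ) (u u' : Fin 2 → ℝ → ℝ)
    (hθrange : ∀ t ∈ Icc 0 T, θ t ∈ Icc (0:ℝ) 1)
    (hθ'range : ∀ t ∈ Icc 0 T, θ' t ∈ Icc (0:ℝ) 1)
    (hu : ∀ (i : Fin 2), ∀ t ∈ Icc 0 T,
      HasDerivAt (u i) (-h (u (1 - i) t - u i t) (θ t) i) t)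
    (hu' : ∀ (i : Fin 2), ∀ t ∈ Icc 0 T,
      HasDerivAt (u' i) (-h (u' (1 - i) t - u' i t) (θ' t) i) t)
    (hθode : ∀ t ∈ Icc 0 T, HasDerivAt θ
      ((1 - θ t) * αs (u 0 t - u 1 t) (θ t) 1
        - θ t * αs (u 1 t - u 0 t) (θ t) 0) t)
    (hθ'ode : ∀ t ∈ Icc 0 T, HasDerivAt θ'
      ((1 - θ' t) * αs (u' 0 t - u' 1 t) (θ' t) 1
        - θ' t * αs (u' 1 t - u' 0 t) (θ' t) 0) t)
    (hθ0 : θ 0 = θbar) (hθ'0 : θ' 0 = θbar)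
    (huT : ∀ i, u i T = ψ i (θ T)) (hu'T : ∀ i, u' i T = ψ i (θ' T)) :
    ∀ t ∈ Icc 0 T, θ t = θ' t :=
  mfg_uniqueness_general T γ hT hγ h αs hderiv hconc hmon ψ hψ θbar θ θ' u u' hθrange hθ'range hu
    hu' hθode hθ'ode hθ0 hθ'0 huT hu'T
end

section
/- Key differential identity in the uniqueness proof: with (θ,u) and (θ̃,ũ) two solutions of the mean field game system as above, and writing u = u(0,t), ū = u(1,t) (similarly for ũ), one has d/dt[(θ-θ̃)(u-ũ) + ((1-θ)-(1-θ̃))(ū-ũ̄)] = θ(-h(ū-u,θ,0) + h(ũ̄-ũ,θ̃,0) + [(ū-ũ̄)-(u-ũ)]α*(ū-u,θ,0)) + θ̃(h(ū-u,θ,0) - h(ũ̄-ũ,θ̃,0) + [-(ū-ũ̄)+(u-ũ)]α*(ũ̄-ũ,θ̃,0)) + (1-θ)(-h(u-ū,θ,1) + h(ũ-ũ̄,θ̃,1) + [(u-ũ)-(ū-ũ̄)]α*(u-ū,θ,1)) + (1-θ̃)(h(u-ū,θ,1) - h(ũ-ũ̄,θ̃,1) + [-(u-ũ)+(ū-ũ̄)]α*(ũ-ũ̄,θ̃,1)).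 -/
/-!
Since `(1 - θ) - (1 - θ̃) = -(θ - θ̃)`, the product rule differentiates the pairing into terms
with factors `(θ - θ̃)'` and `θ - θ̃`; substituting the mean field game equations for the
derivatives, the regrouping by the weights `θ, θ̃, 1 - θ, 1 - θ̃` is a ring identity.
-/

theorem HasDerivAt.twoState_pairing {𝕜 : Type*} [NontriviallyNormedField 𝕜]
    {θ θt u ub ut ubt : 𝕜 → 𝕜} {θ' θt' u' ub' ut' ubt' t : 𝕜}
    (hθ : HasDerivAt θ θ' t) (hθt : HasDerivAt θt θt' t)
    (hu : HasDerivAt u u' t) (hub : HasDerivAt ub ub' t)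
    (hut : HasDerivAt ut ut' t) (hubt : HasDerivAt ubt ubt' t) :
    HasDerivAt (fun s =>
        (θ s - θt s) * (u s - ut s) + ((1 - θ s) - (1 - θt s)) * (ub s - ubt s))
      ((θ' - θt') * ((u t - ut t) - (ub t - ubt t))
        + (θ t - θt t) * ((u' - ut') - (ub' - ubt'))) t := by
  have H := ((hθ.sub hθt).mul (hu.sub hut)).add
    (((hθ.const_sub 1).sub (hθt.const_sub 1)).mul (hub.sub hubt))
  refine H.congr_deriv ?_
  simp only [Pi.sub_apply]
  ring

/-- Key differential identity in the uniqueness proof: with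
`(θ,u)` and `(θ̃,ũ)` two solutions of the mean field game system (writing
`u = u(0,·)`, `ū = u(1,·)` and similarly for the tilde solution), the quantity
`(θ-θ̃)(u-ũ) + ((1-θ)-(1-θ̃))(ū-ũ̄)` has the stated derivative. -/
theorem mfg_uniqueness_differential_identity
    (h αs : ℝ → ℝ → Fin 2 → ℝ)
    (θ θt u ub ut ubt : ℝ → ℝ) (t : ℝ)
    (hu : HasDerivAt u (-h (ub t - u t) (θ t) 0) t)
    (hub : HasDerivAt ub (-h (u t - ub t) (θ t) 1) t)
    (hut : HasDerivAt ut (-h (ubt t - ut t) (θt t) 0) t)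
    (hubt : HasDerivAt ubt (-h (ut t - ubt t) (θt t) 1) t)
    (hθ : HasDerivAt θ
      ((1 - θ t) * αs (u t - ub t) (θ t) 1 - θ t * αs (ub t - u t) (θ t) 0) t)
    (hθt : HasDerivAt θt
      ((1 - θt t) * αs (ut t - ubt t) (θt t) 1
        - θt t * αs (ubt t - ut t) (θt t) 0) t) :
    HasDerivAt (fun s =>
        (θ s - θt s) * (u s - ut s) + ((1 - θ s) - (1 - θt s)) * (ub s - ubt s))
      (θ t * (-h (ub t - u t) (θ t) 0 + h (ubt t - ut t) (θt t) 0
          + ((ub t - ubt t) - (u t - ut t)) * αs (ub t - u t) (θ t) 0)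
        + θt t * (h (ub t - u t) (θ t) 0 - h (ubt t - ut t) (θt t) 0
          + (-(ub t - ubt t) + (u t - ut t)) * αs (ubt t - ut t) (θt t) 0)
        + (1 - θ t) * (-h (u t - ub t) (θ t) 1 + h (ut t - ubt t) (θt t) 1
          + ((u t - ut t) - (ub t - ubt t)) * αs (u t - ub t) (θ t) 1)
        + (1 - θt t) * (h (u t - ub t) (θ t) 1 - h (ut t - ubt t) (θt t) 1
          + (-(u t - ut t) + (ub t - ubt t)) * αs (ut t - ubt t) (θt t) 1)) t := by
  refine (hθ.twoState_pairing hθt hu hub hut hubt).congr_deriv ?_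
  ring
end
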